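/- Let ψ₀ ∈ ℝ and define six ring lights at elevation 45° by l_k = (cos(ψ₀ + kπ/3)/√2, sin(ψ₀ + kπ/3)/√2, 1/√2) for k = 0, 1, …, 5. Then for every unit vector n ∈ ℝ³ with n₃ > 0, the set of lights with positive shading {l_k : ⟪n, l_k⟫ > 0} spans ℝ³, and n is the unique vector x ∈ ℝ³ satisfying ⟪x, l_k⟫ = max(⟪n, l_k⟫, 0) for every k with ⟪n, l_k⟫ > 0. Hence every unit normal in the open upper hemisphere is recovered exactly from its clamped shading sequence under the six-light ring setup. -/

import Mathlib

open scoped RealInnerProductSpace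

/-- The ring light at azimuth `θ` at elevation 45°:
`l(θ) = (cos θ/√2, sin θ/√2, 1/√2)`. -/
noncomputable def ringLight (θ : ℝ) : EuclideanSpace ℝ (Fin 3) :=
  (EuclideanSpace.equiv (Fin 3) ℝ).symm
    ![Real.cos θ / Real.sqrt 2, Real.sin θ / Real.sqrt 2, 1 / Real.sqrt 2]

/-- The `k`-th of six uniformly spaced ring lights with offset `ψ₀`. -/
noncomputable def sixLight (ψ₀ : ℝ) (k : Fin 6) : EuclideanSpace ℝ (Fin 3) :=
  ringLight (ψ₀ + k * Real.pi / 3)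

lemma inner_ringLight (x : EuclideanSpace ℝ (Fin 3)) (θ : ℝ) :
    ⟪x, ringLight θ⟫ = (x 0 * Real.cos θ + x 1 * Real.sin θ + x 2) / Real.sqrt 2 := by
  simp [ringLight, PiLp.inner_apply, Fin.sum_univ_three, EuclideanSpace.equiv]
  ring

lemma ringLight_inner_zero {x : EuclideanSpace ℝ (Fin 3)} {θ : ℝ}
    (h : ⟪x, ringLight θ⟫ = 0) :
    x 0 * Real.cos θ + x 1 * Real.sin θ + x 2 = 0 := by
  rw [inner_ringLight, div_eq_zero_iff] at h
  rcases h with h | h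
  · exact h
  · have : (0:ℝ) < Real.sqrt 2 := Real.sqrt_pos.mpr (by norm_num)
    linarith

lemma sixLight_zero (ψ₀ : ℝ) : sixLight ψ₀ 0 = ringLight ψ₀ := by
  rw [sixLight, show ψ₀ + ((0 : Fin 6):ℝ) * Real.pi / 3 = ψ₀ by
    simp only [show ((0 : Fin 6):ℕ) = 0 from rfl]; push_cast; ring]

lemma sixLight_one (ψ₀ : ℝ) : sixLight ψ₀ 1 = ringLight (ψ₀ + Real.pi / 3) := by
  rw [sixLight, show ψ₀ + ((1 : Fin 6):ℝ) * Real.pi / 3 = ψ₀ + Real.pi / 3 by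
    simp only [show ((1 : Fin 6):ℕ) = 1 from rfl]; push_cast; ring]

lemma sixLight_two (ψ₀ : ℝ) : sixLight ψ₀ 2 = ringLight (ψ₀ + 2 * Real.pi / 3) := by
  rw [sixLight, show ψ₀ + ((2 : Fin 6):ℝ) * Real.pi / 3 = ψ₀ + 2 * Real.pi / 3 by
    simp only [show ((2 : Fin 6):ℕ) = 2 from rfl]; push_cast; ring]

lemma sixLight_three (ψ₀ : ℝ) : sixLight ψ₀ 3 = ringLight (ψ₀ + Real.pi) := by
  rw [sixLight, show ψ₀ + ((3 : Fin 6):ℝ) * Real.pi / 3 = ψ₀ + Real.pi by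
    simp only [show ((3 : Fin 6):ℕ) = 3 from rfl]; push_cast; ring]

lemma sixLight_four (ψ₀ : ℝ) : sixLight ψ₀ 4 = ringLight (ψ₀ + 4 * Real.pi / 3) := by
  rw [sixLight, show ψ₀ + ((4 : Fin 6):ℝ) * Real.pi / 3 = ψ₀ + 4 * Real.pi / 3 by
    simp only [show ((4 : Fin 6):ℕ) = 4 from rfl]; push_cast; ring]

lemma sixLight_five (ψ₀ : ℝ) : sixLight ψ₀ 5 = ringLight (ψ₀ + 5 * Real.pi / 3) := by
  rw [sixLight, show ψ₀ + ((5 : Fin 6):ℝ) * Real.pi / 3 = ψ₀ + 5 * Real.pi / 3 by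
    simp only [show ((5 : Fin 6):ℕ) = 5 from rfl]; push_cast; ring]

lemma auxSolve (c s r a b d x0 x1 x2 : ℝ) (hcs : c^2 + s^2 = 1) (hr : r^2 = 3)
    (ha : a = 1 ∨ a = -1) (hb : b = 1 ∨ b = -1) (hd : d = 1 ∨ d = -1)
    (e0 : a*(x0*c + x1*s) + x2 = 0)
    (e1 : b*(x0*(c - s*r) + x1*(s + c*r)) + 2*x2 = 0)
    (e2 : d*(x0*(-c - s*r) + x1*(-s + c*r)) + 2*x2 = 0) :
    x0 = 0 ∧ x1 = 0 ∧ x2 = 0 := by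
  have ha2 : a^2 = 1 := by rcases ha with rfl|rfl <;> norm_num
  have hb2 : b^2 = 1 := by rcases hb with rfl|rfl <;> norm_num
  have hd2 : d^2 = 1 := by rcases hd with rfl|rfl <;> norm_num
  have hu1 : (x0*c + x1*s) + a*x2 = 0 := by
    linear_combination a*e0 - (x0*c + x1*s)*ha2
  have hu2 : (x0*c + x1*s) + (x1*c - x0*s)*r + 2*b*x2 = 0 := by
    linear_combination b*e1 - (x0*(c - s*r) + x1*(s + c*r))*hb2
  have hu3 : -(x0*c + x1*s) + (x1*c - x0*s)*r + 2*d*x2 = 0 := by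
    linear_combination d*e2 - (x0*(-c - s*r) + x1*(-s + c*r))*hd2
  have hK : (a - b + d)*x2 = 0 := by linear_combination hu1 - hu2/2 + hu3/2
  have hx2 : x2 = 0 := by
    rcases ha with rfl|rfl <;> rcases hb with rfl|rfl <;> rcases hd with rfl|rfl <;>
      linarith [hK]
  have hu : x0*c + x1*s = 0 := by linear_combination hu1 - a*hx2
  have hvr : (x1*c - x0*s)*r = 0 := by linear_combination hu2 - hu - 2*b*hx2
  have hv : x1*c - x0*s = 0 := by
    linear_combination (r/3)*hvr - ((x1*c - x0*s)/3)*hr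
  exact ⟨by linear_combination c*hu - s*hv - x0*hcs,
         by linear_combination s*hu + c*hv - x1*hcs, hx2⟩

open Real in
lemma cos_two_pi_div_three' : Real.cos (2 * π / 3) = -(1/2) := by
  have h : 2 * π / 3 = π - π / 3 := by ring
  rw [h, Real.cos_pi_sub, Real.cos_pi_div_three]

open Real in
lemma sin_two_pi_div_three' : Real.sin (2 * π / 3) = Real.sqrt 3 / 2 := by
  have h : 2 * π / 3 = π - π / 3 := by ring
  rw [h, Real.sin_pi_sub, Real.sin_pi_div_three]

open Real in
lemma cos_four_pi_div_three' : Real.cos (4 * π / 3) = -(1/2) := by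
  have h : 4 * π / 3 = π - -(π / 3) := by ring
  rw [h, Real.cos_pi_sub, Real.cos_neg, Real.cos_pi_div_three]

open Real in
lemma sin_four_pi_div_three' : Real.sin (4 * π / 3) = -(Real.sqrt 3 / 2) := by
  have h : 4 * π / 3 = π - -(π / 3) := by ring
  rw [h, Real.sin_pi_sub, Real.sin_neg, Real.sin_pi_div_three]

open Real in
lemma cos_five_pi_div_three' : Real.cos (5 * π / 3) = 1/2 := by
  have h : 5 * π / 3 = π - -(2 * π / 3) := by ring
  rw [h, Real.cos_pi_sub, Real.cos_neg, cos_two_pi_div_three']; norm_num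

open Real in
lemma sin_five_pi_div_three' : Real.sin (5 * π / 3) = -(Real.sqrt 3 / 2) := by
  have h : 5 * π / 3 = π - -(2 * π / 3) := by ring
  rw [h, Real.sin_pi_sub, Real.sin_neg, sin_two_pi_div_three']

/-- If `x` is orthogonal to one light from each opposite pair, then `x = 0`. -/
lemma zero_of_inner (ψ₀ : ℝ) (x : EuclideanSpace ℝ (Fin 3))
    (h0 : ⟪x, sixLight ψ₀ 0⟫ = 0 ∨ ⟪x, sixLight ψ₀ 3⟫ = 0)
    (h1 : ⟪x, sixLight ψ₀ 1⟫ = 0 ∨ ⟪x, sixLight ψ₀ 4⟫ = 0)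
    (h2 : ⟪x, sixLight ψ₀ 2⟫ = 0 ∨ ⟪x, sixLight ψ₀ 5⟫ = 0) :
    x = 0 := by
  have hcs : (Real.cos ψ₀)^2 + (Real.sin ψ₀)^2 = 1 := Real.cos_sq_add_sin_sq ψ₀
  have hr : (Real.sqrt 3)^2 = 3 := Real.sq_sqrt (by norm_num)
  obtain ⟨a, ha, e0⟩ : ∃ a : ℝ, (a = 1 ∨ a = -1) ∧
      a*(x 0 * Real.cos ψ₀ + x 1 * Real.sin ψ₀) + x 2 = 0 := by
    rcases h0 with h | h
    · rw [sixLight_zero] at h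
      have h' := ringLight_inner_zero h
      refine ⟨1, Or.inl rfl, ?_⟩
      linear_combination h'
    · rw [sixLight_three] at h
      have h' := ringLight_inner_zero h
      rw [Real.cos_add, Real.sin_add, Real.cos_pi, Real.sin_pi] at h'
      refine ⟨-1, Or.inr rfl, ?_⟩
      linear_combination h'
  obtain ⟨b, hb, e1⟩ : ∃ b : ℝ, (b = 1 ∨ b = -1) ∧
      b*(x 0 * (Real.cos ψ₀ - Real.sin ψ₀ * Real.sqrt 3)
        + x 1 * (Real.sin ψ₀ + Real.cos ψ₀ * Real.sqrt 3)) + 2*(x 2) = 0 := by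
    rcases h1 with h | h
    · rw [sixLight_one] at h
      have h' := ringLight_inner_zero h
      rw [Real.cos_add, Real.sin_add, Real.cos_pi_div_three, Real.sin_pi_div_three] at h'
      refine ⟨1, Or.inl rfl, ?_⟩
      linear_combination 2*h'
    · rw [sixLight_four] at h
      have h' := ringLight_inner_zero h
      rw [Real.cos_add, Real.sin_add, cos_four_pi_div_three', sin_four_pi_div_three'] at h'
      refine ⟨-1, Or.inr rfl, ?_⟩
      linear_combination 2*h'
  obtain ⟨d, hd, e2⟩ : ∃ d : ℝ, (d = 1 ∨ d = -1) ∧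
      d*(x 0 * (-Real.cos ψ₀ - Real.sin ψ₀ * Real.sqrt 3)
        + x 1 * (-Real.sin ψ₀ + Real.cos ψ₀ * Real.sqrt 3)) + 2*(x 2) = 0 := by
    rcases h2 with h | h
    · rw [sixLight_two] at h
      have h' := ringLight_inner_zero h
      rw [Real.cos_add, Real.sin_add, cos_two_pi_div_three', sin_two_pi_div_three'] at h'
      refine ⟨1, Or.inl rfl, ?_⟩
      linear_combination 2*h'
    · rw [sixLight_five] at h
      have h' := ringLight_inner_zero h
      rw [Real.cos_add, Real.sin_add, cos_five_pi_div_three', sin_five_pi_div_three'] at h'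
      refine ⟨-1, Or.inr rfl, ?_⟩
      linear_combination 2*h'
  obtain ⟨hx0, hx1, hx2⟩ := auxSolve (Real.cos ψ₀) (Real.sin ψ₀) (Real.sqrt 3) a b d
    (x 0) (x 1) (x 2) hcs hr ha hb hd e0 e1 e2
  ext i
  fin_cases i
  · exact hx0
  · exact hx1
  · exact hx2

/-- Each opposite pair of lights has positive total shading given `0 < n 2`. -/
lemma pair_pos (ψ₀ : ℝ) (n : EuclideanSpace ℝ (Fin 3)) (hn3 : 0 < n 2)
    (j jj : Fin 6) (h : ((jj : Fin 6) : ℝ) = ((j : Fin 6) : ℝ) + 3) :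
    0 < ⟪n, sixLight ψ₀ j⟫ + ⟪n, sixLight ψ₀ jj⟫ := by
  rw [sixLight, sixLight, inner_ringLight, inner_ringLight, h,
    show ψ₀ + ((j : ℝ) + 3) * Real.pi / 3
      = Real.pi + (ψ₀ + (j : ℝ) * Real.pi / 3) by ring, ← add_div]
  apply div_pos ?_ (Real.sqrt_pos.mpr (by norm_num : (0:ℝ) < 2))
  simp only [Real.cos_add, Real.sin_add, Real.cos_pi, Real.sin_pi]
  ring_nf
  linarith

/-- Under the six-light ring setup at elevation 45°, for every unit
normal `n` in the open upper hemisphere the lights with positive shading span `ℝ³`,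
and `n` is the unique vector `x` with `⟪x, l_k⟫ = max(⟪n, l_k⟫, 0)` for all `k` with
`⟪n, l_k⟫ > 0`: every such normal is recovered exactly from its clamped shading
sequence. -/
theorem normal_recovered_six_ring_lights (ψ₀ : ℝ) (n : EuclideanSpace ℝ (Fin 3))
    (hn : ‖n‖ = 1) (hn3 : 0 < n 2) :
    Submodule.span ℝ (sixLight ψ₀ '' {k | 0 < ⟪n, sixLight ψ₀ k⟫}) = ⊤ ∧
      (∀ k, 0 < ⟪n, sixLight ψ₀ k⟫ → ⟪n, sixLight ψ₀ k⟫ = max ⟪n, sixLight ψ₀ k⟫ 0) ∧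
      ∀ x : EuclideanSpace ℝ (Fin 3),
        (∀ k, 0 < ⟪n, sixLight ψ₀ k⟫ → ⟪x, sixLight ψ₀ k⟫ = max ⟪n, sixLight ψ₀ k⟫ 0) →
          x = n := by
  have P0 : 0 < ⟪n, sixLight ψ₀ 0⟫ + ⟪n, sixLight ψ₀ 3⟫ :=
    pair_pos ψ₀ n hn3 0 3 (by
      norm_num [show ((3:Fin 6):ℕ) = 3 from rfl, show ((0:Fin 6):ℕ) = 0 from rfl])
  have P1 : 0 < ⟪n, sixLight ψ₀ 1⟫ + ⟪n, sixLight ψ₀ 4⟫ :=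
    pair_pos ψ₀ n hn3 1 4 (by
      norm_num [show ((4:Fin 6):ℕ) = 4 from rfl, show ((1:Fin 6):ℕ) = 1 from rfl])
  have P2 : 0 < ⟪n, sixLight ψ₀ 2⟫ + ⟪n, sixLight ψ₀ 5⟫ :=
    pair_pos ψ₀ n hn3 2 5 (by
      norm_num [show ((5:Fin 6):ℕ) = 5 from rfl, show ((2:Fin 6):ℕ) = 2 from rfl])
  have key : ∀ x : EuclideanSpace ℝ (Fin 3),
      (∀ k, 0 < ⟪n, sixLight ψ₀ k⟫ → ⟪x, sixLight ψ₀ k⟫ = 0) → x = 0 := by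
    intro x hx
    apply zero_of_inner ψ₀ x
    · rcases lt_or_ge 0 ⟪n, sixLight ψ₀ 0⟫ with h | h
      · exact Or.inl (hx 0 h)
      · exact Or.inr (hx 3 (by linarith))
    · rcases lt_or_ge 0 ⟪n, sixLight ψ₀ 1⟫ with h | h
      · exact Or.inl (hx 1 h)
      · exact Or.inr (hx 4 (by linarith))
    · rcases lt_or_ge 0 ⟪n, sixLight ψ₀ 2⟫ with h | h
      · exact Or.inl (hx 2 h)
      · exact Or.inr (hx 5 (by linarith))
  refine ⟨?_, fun k hk => (max_eq_left hk.le).symm, ?_⟩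
  · rw [← Submodule.orthogonal_eq_bot_iff, Submodule.eq_bot_iff]
    intro y hy
    apply key y
    intro k hk
    have hmem : sixLight ψ₀ k ∈
        Submodule.span ℝ (sixLight ψ₀ '' {k | 0 < ⟪n, sixLight ψ₀ k⟫}) :=
      Submodule.subset_span ⟨k, hk, rfl⟩
    have := (Submodule.mem_orthogonal _ y).mp hy _ hmem
    rwa [real_inner_comm] at this
  · intro x hx
    have hxn : x - n = 0 := key (x - n) (fun k hk => by
      rw [inner_sub_left, hx k hk, max_eq_left hk.le, sub_self])
    exact sub_eq_zero.mp hxn
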